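/- arXiv:1512.07420 — 11 statements merged into one kernel-verified Lean document; each statement's English description precedes it below -/
import Mathlib

section
/- The local metric dimension of a nontrivial connected graph G equals 1 if and only if G is bipartite. -/
open SimpleGraph

/-- `S` is a local metric set for `G`: every pair of adjacent vertices is
distinguished (by distance) by some vertex of `S`. -/
def IsLocalMetricSet {V : Type*} (G : SimpleGraph V) (S : Set V) : Prop :=
  ∀ u v : V, G.Adj u v → ∃ s ∈ S, G.dist s u ≠ G.dist s v

/-- The local metric dimension of `G`: the minimum cardinality of a local metric set. -/
noncomputable def localMetricDim {V : Type*} (G : SimpleGraph V) : ℕ :=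
  sInf {n | ∃ S : Set V, S.ncard = n ∧ IsLocalMetricSet G S}

lemma zmod2_ne' : ∀ a b : ZMod 2, a ≠ b → b = a + 1 := by decide

lemma zmod2_ne {a b : ZMod 2} (h : a ≠ b) : b = a + 1 := zmod2_ne' a b h

lemma coloring_walk_parity {V : Type*} {G : SimpleGraph V} (c : G.Coloring (ZMod 2))
    {v u : V} (p : G.Walk v u) : c u = c v + (p.length : ZMod 2) := by
  induction p with
  | nil => simp
  | cons h p ih =>
    rw [ih, zmod2_ne (c.valid h), Walk.length_cons]
    push_cast
    ring

lemma dist_parity {V : Type*} {G : SimpleGraph V} (hconn : G.Connected)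
    (c : G.Coloring (ZMod 2)) (v u : V) :
    ((G.dist v u : ZMod 2)) = c u - c v := by
  obtain ⟨p, hp⟩ := hconn.exists_walk_length_eq_dist v u
  rw [← hp, coloring_walk_parity c p]; ring

/-- The local metric dimension of a nontrivial connected graph equals 1
iff the graph is bipartite. -/
theorem stmt_0 {V : Type*} [Fintype V] (G : SimpleGraph V)
    (hconn : G.Connected) (hnt : 1 < Fintype.card V) :
    localMetricDim G = 1 ↔ G.Colorable 2 := by
  have hedge : ∃ a b : V, G.Adj a b := by
    obtain ⟨u, w, huw⟩ := Fintype.exists_pair_of_one_lt_card hnt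
    obtain ⟨p⟩ := hconn u w
    cases p with
    | nil => exact absurd rfl huw
    | cons h _ => exact ⟨_, _, h⟩
  constructor
  · intro hdim
    have hne : {n | ∃ S : Set V, S.ncard = n ∧ IsLocalMetricSet G S}.Nonempty := by
      by_contra h
      rw [Set.not_nonempty_iff_eq_empty] at h
      rw [localMetricDim, h, Nat.sInf_empty] at hdim
      exact one_ne_zero hdim.symm
    have hmem := Nat.sInf_mem hne
    rw [← localMetricDim, hdim] at hmem
    obtain ⟨S, hS1, hS⟩ := hmem
    obtain ⟨v, rfl⟩ := Set.ncard_eq_one.mp hS1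
    -- color by parity of distance from v
    have hadj1 : ∀ a b : V, G.Adj a b → G.dist a b ≤ 1 := fun a b hab => by
      simpa using G.dist_le (Walk.cons hab Walk.nil)
    refine ⟨Coloring.mk (fun u => (G.dist v u : ZMod 2)) ?_⟩
    intro a b hab heq
    obtain ⟨s, hs, hd⟩ := hS a b hab
    rw [Set.mem_singleton_iff] at hs
    rw [hs] at hd
    have h1 : G.dist v b ≤ G.dist v a + 1 :=
      le_trans hconn.dist_triangle (Nat.add_le_add_left (hadj1 a b hab) _)
    have h2 : G.dist v a ≤ G.dist v b + 1 :=
      le_trans hconn.dist_triangle (Nat.add_le_add_left (hadj1 b a hab.symm) _)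
    have hcase : G.dist v b = G.dist v a + 1 ∨ G.dist v a = G.dist v b + 1 := by omega
    have h10 : (1 : ZMod 2) ≠ 0 := by decide
    rcases hcase with h | h
    · have : (G.dist v b : ZMod 2) = G.dist v a + 1 := by rw [h]; push_cast; ring
      rw [heq] at this
      exact h10 (by linear_combination -this)
    · have : (G.dist v a : ZMod 2) = G.dist v b + 1 := by rw [h]; push_cast; ring
      rw [heq] at this
      exact h10 (by linear_combination -this)
  · intro hcol
    have hc2 : (2 : ℕ) ≤ Fintype.card (ZMod 2) := by rw [ZMod.card]
    let c : G.Coloring (ZMod 2) := hcol.toColoring hc2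
    have : Nonempty V := Fintype.card_pos_iff.mp (by omega)
    obtain ⟨v⟩ := this
    have h1 : IsLocalMetricSet G {v} := by
      intro a b hab
      refine ⟨v, rfl, ?_⟩
      intro h
      have ha := dist_parity hconn c v a
      have hb := dist_parity hconn c v b
      rw [h, hb] at ha
      exact c.valid hab (sub_left_inj.mp ha).symm
    rw [localMetricDim]
    apply le_antisymm
    · exact Nat.sInf_le ⟨{v}, Set.ncard_singleton v, h1⟩
    · rw [Nat.one_le_iff_ne_zero]
      intro h0
      have hmem := Nat.sInf_mem (⟨1, ⟨{v}, Set.ncard_singleton v, h1⟩⟩ :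
        Set.Nonempty {n | ∃ S : Set V, S.ncard = n ∧ IsLocalMetricSet G S})
      rw [h0] at hmem
      obtain ⟨S, hS0, hS⟩ := hmem
      have hSe : S = ∅ := by rwa [Set.ncard_eq_zero (Set.toFinite S)] at hS0
      subst hSe
      obtain ⟨a, b, hab⟩ := hedge
      obtain ⟨s, hs, -⟩ := hS a b hab
      exact hs
end

section
/- For every nontrivial connected graph G on n vertices, dim_l(G) ≤ n − 1, with equality if and only if G is the complete graph K_n. -/
open SimpleGraph

/-- Any set containing an endpoint of every edge is a local metric set. -/
lemma isLocalMetricSet_of_cover {V : Type*} {G : SimpleGraph V} (hconn : G.Connected)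
    {S : Set V} (h : ∀ u v : V, G.Adj u v → u ∈ S ∨ v ∈ S) : IsLocalMetricSet G S := by
  intro u v huv
  rcases h u v huv with hu | hv
  · exact ⟨u, hu, by
      have : 0 < G.dist u v := hconn.pos_dist_of_ne huv.ne
      rw [SimpleGraph.dist_self]; exact this.ne⟩
  · exact ⟨v, hv, by
      have : 0 < G.dist v u := hconn.pos_dist_of_ne huv.ne'
      rw [SimpleGraph.dist_self]; exact this.ne'⟩

/-- For every nontrivial connected graph on `n` vertices,
`dim_l(G) ≤ n - 1`, with equality iff `G` is complete. -/
theorem stmt_1 {V : Type*} [Fintype V] (G : SimpleGraph V)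
    (hconn : G.Connected) (hnt : 1 < Fintype.card V) :
    localMetricDim G ≤ Fintype.card V - 1 ∧
      (localMetricDim G = Fintype.card V - 1 ↔ G = ⊤) := by
  have hcard : Nat.card V = Fintype.card V := Nat.card_eq_fintype_card
  -- pick a vertex
  have hne : Nonempty V := Fintype.card_pos_iff.mp (by omega)
  obtain ⟨w⟩ := hne
  -- upper bound: V \ {w}
  have hmem : Fintype.card V - 1 ∈
      {n | ∃ S : Set V, S.ncard = n ∧ IsLocalMetricSet G S} := by
    refine ⟨({w} : Set V)ᶜ, ?_, ?_⟩
    · have := Set.ncard_add_ncard_compl ({w} : Set V)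
      simp [hcard] at this
      omega
    · refine isLocalMetricSet_of_cover hconn ?_
      intro u v huv
      by_cases hu : u = w
      · right; simp [Set.mem_compl_iff, hu ▸ huv.ne']
      · left; simp [Set.mem_compl_iff, hu]
  have hub : localMetricDim G ≤ Fintype.card V - 1 := Nat.sInf_le hmem
  refine ⟨hub, ?_, ?_⟩
  · -- equality → complete, by contraposition
    intro heq
    by_contra hG
    -- there exist distinct non-adjacent vertices
    have : ∃ u v : V, u ≠ v ∧ ¬ G.Adj u v := by
      by_contra h
      push_neg at h
      apply hG
      ext u v
      simp only [top_adj]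
      exact ⟨fun h' => h'.ne, fun h' => h u v h'⟩
    obtain ⟨u, v, huv, hnadj⟩ := this
    have hmem2 : Fintype.card V - 2 ∈
        {n | ∃ S : Set V, S.ncard = n ∧ IsLocalMetricSet G S} := by
      refine ⟨({u, v} : Set V)ᶜ, ?_, ?_⟩
      · have := Set.ncard_add_ncard_compl ({u, v} : Set V)
        rw [Set.ncard_pair huv] at this
        simp [hcard] at this
        omega
      · refine isLocalMetricSet_of_cover hconn ?_
        intro x y hxy
        by_cases hx : x ∈ ({u, v} : Set V)
        · right
          simp only [Set.mem_compl_iff, Set.mem_insert_iff, Set.mem_singleton_iff]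
          rintro (hy | hy)
          · rcases hx with hx | hx
            · exact hxy.ne (hx.trans hy.symm)
            · exact hnadj (hy ▸ hx ▸ hxy).symm
          · rcases hx with hx | hx
            · exact hnadj (hy ▸ hx ▸ hxy)
            · exact hxy.ne (hx.trans hy.symm)
        · left; exact hx
    have hle : localMetricDim G ≤ Fintype.card V - 2 := Nat.sInf_le hmem2
    have h2 : 2 ≤ Fintype.card V := hnt
    omega
  · -- complete → equality
    intro hG
    subst hG
    refine le_antisymm hub (le_csInf ⟨_, hmem⟩ ?_)
    rintro n ⟨S, rfl, hS⟩
    -- complement of S has at most one element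
    have hcompl : (Sᶜ).ncard ≤ 1 := by
      by_contra h
      push_neg at h
      obtain ⟨a, b, ha, hb, hab⟩ := Set.one_lt_ncard_iff (Sᶜ.toFinite) |>.mp h
      obtain ⟨s, hs, hds⟩ := hS a b (by simp [hab])
      have hsa : s ≠ a := fun h => ha (h ▸ hs)
      have hsb : s ≠ b := fun h => hb (h ▸ hs)
      have d1 : (⊤ : SimpleGraph V).dist s a = 1 := dist_eq_one_iff_adj.mpr (by simp [hsa])
      have d2 : (⊤ : SimpleGraph V).dist s b = 1 := dist_eq_one_iff_adj.mpr (by simp [hsb])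
      exact hds (d1.trans d2.symm)
    have := Set.ncard_add_ncard_compl S
    rw [hcard] at this
    omega
end

section
/- Let J be an induced subgraph of G_1,…,G_n, let H be the amalgamation of the G_i over J (identifying the copies of J). If a ∈ V(H) and uv is an edge of G_i − J_i with d_{G_i}(w,u) = d_{G_i}(w,v) for every w ∈ V(J_i) (i.e., uv is parallel to J_i in G_i), and d_H(a,u) ≠ d_H(a,v), then a ∈ V(G_i − J_i). -/
open SimpleGraph

/-- `H` is the subgraph-amalgamation of the family `G i` over the common induced
subgraph `J`, via induced embeddings `e i : J → G i` and `f i : G i → H`. -/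
structure IsAmalgamation {ι VJ W : Type*} {Vg : ι → Type*}
    (J : SimpleGraph VJ) (G : ∀ i, SimpleGraph (Vg i)) (H : SimpleGraph W)
    (e : ∀ i, VJ → Vg i) (f : ∀ i, Vg i → W) : Prop where
  e_inj : ∀ i, Function.Injective (e i)
  e_ind : ∀ i a b, (G i).Adj (e i a) (e i b) ↔ J.Adj a b
  f_inj : ∀ i, Function.Injective (f i)
  f_ind : ∀ i x y, H.Adj (f i x) (f i y) ↔ (G i).Adj x y
  compat : ∀ i j a, f i (e i a) = f j (e j a)
  inter : ∀ i j x y, i ≠ j → f i x = f j y → ∃ a, x = e i a ∧ y = e j a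
  cover : ∀ w, ∃ i x, f i x = w
  edge_mem : ∀ x y, H.Adj x y → ∃ i a b, x = f i a ∧ y = f i b

/-- An edge `uv` of `G - J` is parallel to `J` in `G` if every vertex of the copy of
`J` (the range of `e`) is equidistant in `G` from `u` and `v`. -/
def ParallelEdge {VJ Vgi : Type*} (G : SimpleGraph Vgi) (e : VJ → Vgi) (u v : Vgi) : Prop :=
  G.Adj u v ∧ u ∉ Set.range e ∧ v ∉ Set.range e ∧ ∀ a, G.dist (e a) u = G.dist (e a) v

/-- If a vertex `a` of the amalgamation `H` distinguishes the endpoints of an edge of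
`G i - J i` parallel to `J i`, then `a` lies in (the copy of) `G i - J i`. -/
theorem stmt_4 {ι VJ W : Type*} {Vg : ι → Type*}
    (J : SimpleGraph VJ) (G : ∀ i, SimpleGraph (Vg i)) (H : SimpleGraph W)
    (e : ∀ i, VJ → Vg i) (f : ∀ i, Vg i → W)
    (amal : IsAmalgamation J G H e f)
    (hGconn : ∀ i, (G i).Connected) (hH : H.Connected)
    (i : ι) (a : W) (u v : Vg i)
    (hpar : ParallelEdge (G i) (e i) u v)
    (hdist : H.dist a (f i u) ≠ H.dist a (f i v)) :
    ∃ x : Vg i, x ∉ Set.range (e i) ∧ f i x = a := by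
  classical
  by_contra hcon
  push_neg at hcon
  -- every representation of `a` in part `i` lies in the copy of `J`
  have ha : ∀ x : Vg i, f i x = a → x ∈ Set.range (e i) := by
    intro x hx
    by_contra hxr
    exact hcon x hxr hx
  -- the map `f i` is a graph homomorphism
  let φ : G i →g H := ⟨f i, fun h => (amal.f_ind i _ _).mpr h⟩
  -- distances do not increase under `f i`
  have haux : ∀ y x : Vg i, H.dist (f i y) (f i x) ≤ (G i).dist y x := by
    intro y x
    obtain ⟨p, hp⟩ := (hGconn i).exists_walk_length_eq_dist y x
    calc H.dist (f i y) (f i x) ≤ (p.map φ).length := SimpleGraph.dist_le _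
      _ = p.length := p.length_map φ
      _ = (G i).dist y x := hp
  -- upper bound through a vertex of J
  have hub : ∀ (b : VJ) (z : Vg i),
      H.dist a (f i z) ≤ H.dist a (f i (e i b)) + (G i).dist (e i b) z := by
    intro b z
    calc H.dist a (f i z) ≤ H.dist a (f i (e i b)) + H.dist (f i (e i b)) (f i z) :=
          hH.dist_triangle
      _ ≤ H.dist a (f i (e i b)) + (G i).dist (e i b) z := by
          exact Nat.add_le_add_left (haux _ _) _
  -- key walk decomposition lemma
  have key : ∀ (w t : W) (p : H.Walk w t), ∀ x : Vg i, x ∉ Set.range (e i) → t = f i x →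
      (∃ b, H.dist w (f i (e i b)) + (G i).dist (e i b) x ≤ p.length) ∨
      (∃ y, f i y = w ∧ (G i).dist y x ≤ p.length) := by
    intro w t p
    induction p with
    | nil =>
        intro x hx ht
        right
        exact ⟨x, ht.symm, by simp [SimpleGraph.dist_self]⟩
    | @cons w c _ hadj q ih =>
        intro x hx ht
        rcases ih x hx ht with ⟨b, hb⟩ | ⟨y, hyc, hylen⟩
        · left
          refine ⟨b, ?_⟩
          have h1 : H.dist w c ≤ 1 := (SimpleGraph.dist_eq_one_iff_adj.mpr hadj).le
          have h2 : H.dist w (f i (e i b)) ≤ H.dist w c + H.dist c (f i (e i b)) :=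
            hH.dist_triangle
          simp only [SimpleGraph.Walk.length_cons]
          omega
        · obtain ⟨k, pk, qk, hw, hc⟩ := amal.edge_mem _ _ hadj
          have hadj' : (G k).Adj pk qk := by
            rw [hw, hc] at hadj
            exact (amal.f_ind k _ _).mp hadj
          by_cases hk : k = i
          · subst hk
            have hyq : y = qk := amal.f_inj k (by rw [hyc, hc])
            right
            refine ⟨pk, hw.symm, ?_⟩
            have h1 : (G k).dist pk y ≤ 1 := by
              rw [hyq]
              exact (SimpleGraph.dist_eq_one_iff_adj.mpr hadj').le
            have h2 : (G k).dist pk x ≤ (G k).dist pk y + (G k).dist y x :=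
              (hGconn k).dist_triangle
            simp only [SimpleGraph.Walk.length_cons]
            omega
          · have : f i y = f k qk := by rw [hyc, hc]
            obtain ⟨b, hyb, hqb⟩ := amal.inter i k y qk (fun h => hk h.symm) this
            left
            refine ⟨b, ?_⟩
            have hcJ : c = f i (e i b) := by rw [hc, hqb, ← amal.compat i k b]
            have h1 : H.dist w (f i (e i b)) ≤ 1 := by
              rw [← hcJ]
              exact (SimpleGraph.dist_eq_one_iff_adj.mpr hadj).le
            have h2 : (G i).dist (e i b) x ≤ q.length := by rw [← hyb]; exact hylen
            simp only [SimpleGraph.Walk.length_cons]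
            omega
  -- for any interior vertex z, a shortest path from a passes through J
  have hcomb : ∀ z : Vg i, z ∉ Set.range (e i) →
      ∃ b, H.dist a (f i (e i b)) + (G i).dist (e i b) z ≤ H.dist a (f i z) := by
    intro z hz
    obtain ⟨p, hp⟩ := hH.exists_walk_length_eq_dist a (f i z)
    rcases key a (f i z) p z hz rfl with ⟨b, hb⟩ | ⟨y, hy, hylen⟩
    · exact ⟨b, by rw [← hp]; exact hb⟩
    · obtain ⟨b, hb⟩ := ha y hy
      refine ⟨b, ?_⟩
      have h0 : H.dist a (f i (e i b)) = 0 := by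
        rw [← hy, hb, SimpleGraph.dist_self]
      rw [h0, zero_add, ← hp, hb]
      exact hylen
  obtain ⟨hadjuv, hu, hv, heq⟩ := hpar
  -- d(a, f i v) ≤ d(a, f i u)
  have h1 : H.dist a (f i v) ≤ H.dist a (f i u) := by
    obtain ⟨b, hb⟩ := hcomb u hu
    calc H.dist a (f i v) ≤ H.dist a (f i (e i b)) + (G i).dist (e i b) v := hub b v
      _ = H.dist a (f i (e i b)) + (G i).dist (e i b) u := by rw [heq b]
      _ ≤ H.dist a (f i u) := hb
  have h2 : H.dist a (f i u) ≤ H.dist a (f i v) := by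
    obtain ⟨b, hb⟩ := hcomb v hv
    calc H.dist a (f i u) ≤ H.dist a (f i (e i b)) + (G i).dist (e i b) u := hub b u
      _ = H.dist a (f i (e i b)) + (G i).dist (e i b) v := by rw [heq b]
      _ ≤ H.dist a (f i v) := hb
  exact hdist (le_antisymm h2 h1)
end

section
/- Let H = ∐{(G_i|J_i)} be a subgraph-amalgamation. A set T ⊆ V(H) distinguishes the union ⋃_i ∥(J_i:G_i) of all parallel edges if and only if for each i, the set T ∩ V(G_i) distinguishes ∥(J_i:G_i). -/
open SimpleGraph

section Aux

variable {ι VJ W : Type*} {Vg : ι → Type*}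
    {J : SimpleGraph VJ} {G : ∀ i, SimpleGraph (Vg i)} {H : SimpleGraph W}
    {e : ∀ i, VJ → Vg i} {f : ∀ i, Vg i → W}

/-- First crossing lemma. -/
lemma firstCross {W : Type*} {H : SimpleGraph W} (P : W → Prop) :
    ∀ {x y : W} (p : H.Walk x y), ¬ P x → P y →
      ∃ (z w : W) (q : H.Walk x w) (r : H.Walk z y), H.Adj w z ∧ P z ∧
        (∀ u ∈ q.support, ¬ P u) ∧ z ∈ p.support ∧ q.length + 1 + r.length = p.length := by
  intro x y p
  induction p with
  | nil => intro hx hy; exact absurd hy hx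
  | @cons a b c h p ih =>
    intro hx hy
    by_cases hb : P b
    · refine ⟨b, a, Walk.nil, p, h, hb, ?_, ?_, by simp [Nat.add_comm]⟩
      · intro u hu; simp at hu; subst hu; exact hx
      · simp [Walk.support_cons, Walk.start_mem_support]
    · obtain ⟨z, w, q, r, hadj, hz, hq, hzs, hlen⟩ := ih hb hy
      refine ⟨z, w, Walk.cons h q, r, hadj, hz, ?_, ?_, by simp [← hlen]; omega⟩
      · intro u hu
        rcases (by simpa [Walk.support_cons] using hu : u = a ∨ u ∈ q.support) with rfl | hu
        · exact hx
        · exact hq u hu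
      · simp [Walk.support_cons]; right; exact hzs

/-- A crossing edge into the range of `f i` lands on a copy of a `J`-vertex. -/
lemma cross_isJ (amal : IsAmalgamation J G H e f) (i : ι) {w z : W}
    (hadj : H.Adj w z) (hw : ¬ ∃ x, f i x = w) (hz : ∃ x, f i x = z) :
    ∃ a, z = f i (e i a) := by
  obtain ⟨y, hy⟩ := hz
  obtain ⟨k, a, b, hwa, hzb⟩ := amal.edge_mem w z hadj
  by_cases hk : k = i
  · subst hk; exact absurd ⟨a, hwa.symm⟩ hw
  · obtain ⟨c, hc1, _⟩ := amal.inter i k y b (Ne.symm hk) (by rw [hy, hzb])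
    exact ⟨c, by rw [← hy, hc1]⟩

/-- Lifting a walk whose non-initial vertices avoid the `J`-copy back into `G i`. -/
lemma liftWalk (amal : IsAmalgamation J G H e f) (i : ι) :
    ∀ {z y : W} (s : H.Walk z y), (∃ x0, f i x0 = z) → (∃ y0, f i y0 = y) →
      (∀ u ∈ s.support.tail, ¬ ∃ a, u = f i (e i a)) →
      ∃ (x0 y0 : Vg i) (gw : (G i).Walk x0 y0),
        f i x0 = z ∧ f i y0 = y ∧ gw.length = s.length := by
  intro z y s
  induction s with
  | nil =>
    rintro ⟨x0, hx0⟩ _ _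
    exact ⟨x0, x0, Walk.nil, hx0, hx0, rfl⟩
  | @cons z z' y h s ih =>
    rintro ⟨x0, hx0⟩ hy htail
    have htail' : ∀ u ∈ s.support.tail, ¬ ∃ a, u = f i (e i a) := by
      intro u hu
      exact htail u (by simp [Walk.support_cons]; exact List.mem_of_mem_tail hu)
    by_cases hz' : ∃ x1, f i x1 = z'
    · obtain ⟨x1, hx1⟩ := hz'
      obtain ⟨x1', y0, gw, hx1', hy0, hlen⟩ := ih ⟨x1, hx1⟩ hy htail'
      have hadjG : (G i).Adj x0 x1' := (amal.f_ind i x0 x1').mp (by rw [hx0, hx1']; exact h)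
      exact ⟨x0, y0, Walk.cons hadjG gw, hx0, hy0, by simp [hlen]⟩
    · exfalso
      obtain ⟨z2, w1, q, r, hadj, hz2, hq, hzs, hlen⟩ :=
        firstCross (fun w => ∃ x, f i x = w) s hz' hy
      obtain ⟨c, hc⟩ := cross_isJ amal i hadj (hq w1 (Walk.end_mem_support q)) hz2
      exact htail z2 (by simp [Walk.support_cons]; exact hzs) ⟨c, hc⟩

/-- Distances in `H` between images under `f i` are at most distances in `G i`. -/
lemma dist_f_le (amal : IsAmalgamation J G H e f) (hGconn : ∀ i, (G i).Connected)
    (i : ι) (x y : Vg i) : H.dist (f i x) (f i y) ≤ (G i).dist x y := by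
  obtain ⟨gw, hgw⟩ := (hGconn i).exists_walk_length_eq_dist x y
  let hom : G i →g H := ⟨f i, fun {a b} h => (amal.f_ind i a b).mpr h⟩
  calc H.dist (f i x) (f i y) ≤ (gw.map hom).length := dist_le (gw.map hom)
    _ = (G i).dist x y := by rw [Walk.length_map, hgw]

lemma not_isJ_of_parallel (amal : IsAmalgamation J G H e f) {i : ι} {v : Vg i}
    (hv : v ∉ Set.range (e i)) : ¬ ∃ a, f i v = f i (e i a) := by
  rintro ⟨a, ha⟩
  exact hv ⟨a, (amal.f_inj i ha).symm⟩

lemma parallel_symm {VJ Vgi : Type*} {G : SimpleGraph Vgi} {e : VJ → Vgi} {u v : Vgi}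
    (h : ParallelEdge G e u v) : ParallelEdge G e v u :=
  ⟨h.1.symm, h.2.2.1, h.2.1, fun a => (h.2.2.2 a).symm⟩

/-- Key lemma A (≤ half): vertices in the `J`-copy are equidistant from the endpoints
of a parallel edge, even in `H`. -/
lemma distJ_le (amal : IsAmalgamation J G H e f) (hGconn : ∀ i, (G i).Connected)
    (hH : H.Connected) {i : ι} {u v : Vg i}
    (hpar : ParallelEdge (G i) (e i) u v) (a₀ : VJ) :
    H.dist (f i (e i a₀)) (f i u) ≤ H.dist (f i (e i a₀)) (f i v) := by
  obtain ⟨p, hp⟩ := hH.exists_walk_length_eq_dist (f i (e i a₀)) (f i v)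
  obtain ⟨z, w1, q, r, hadj, ⟨b, hb⟩, hq, _, hlen⟩ :=
    firstCross (fun w => ∃ a, w = f i (e i a)) p.reverse
      (fun ⟨a, ha⟩ => not_isJ_of_parallel amal hpar.2.2.1 ⟨a, ha⟩) ⟨a₀, rfl⟩
  -- segment from z to f i v
  subst hb
  set s : H.Walk (f i (e i b)) (f i v) := Walk.cons hadj.symm q.reverse with hs
  have htail : ∀ u' ∈ s.support.tail, ¬ ∃ a, u' = f i (e i a) := by
    intro u' hu'
    have : u' ∈ q.support := by
      have := hu'
      rw [hs] at this
      simp only [Walk.support_cons, List.tail_cons, Walk.support_reverse,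
        List.mem_reverse] at this
      exact this
    exact hq u' this
  obtain ⟨x0, y0, gw, hx0, hy0, hglen⟩ := liftWalk amal i s ⟨e i b, rfl⟩ ⟨v, rfl⟩ htail
  have hx0' : x0 = e i b := amal.f_inj i hx0
  have hy0' : y0 = v := amal.f_inj i hy0
  subst hx0'
  rw [Walk.length_reverse] at hlen
  have hdv : (G i).dist (e i b) v ≤ q.length + 1 := by
    have h1 : (G i).dist (e i b) y0 ≤ s.length := hglen ▸ dist_le gw
    rw [hy0'] at h1
    calc (G i).dist (e i b) v ≤ s.length := h1
      _ = q.length + 1 := by simp [hs]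
  have hrz : H.dist (f i (e i a₀)) (f i (e i b)) ≤ r.length := by
    calc H.dist (f i (e i a₀)) (f i (e i b)) ≤ r.reverse.length := dist_le r.reverse
      _ = r.length := Walk.length_reverse r
  calc H.dist (f i (e i a₀)) (f i u)
      ≤ H.dist (f i (e i a₀)) (f i (e i b)) + H.dist (f i (e i b)) (f i u) :=
        hH.dist_triangle
    _ ≤ r.length + (G i).dist (e i b) u := by
        exact Nat.add_le_add hrz (dist_f_le amal hGconn i _ _)
    _ = r.length + (G i).dist (e i b) v := by rw [hpar.2.2.2 b]
    _ ≤ r.length + (q.length + 1) := Nat.add_le_add_left hdv _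
    _ = q.length + 1 + r.length := by omega
    _ = p.length := hlen
    _ = H.dist (f i (e i a₀)) (f i v) := hp

lemma distJ (amal : IsAmalgamation J G H e f) (hGconn : ∀ i, (G i).Connected)
    (hH : H.Connected) {i : ι} {u v : Vg i}
    (hpar : ParallelEdge (G i) (e i) u v) (a₀ : VJ) :
    H.dist (f i (e i a₀)) (f i u) = H.dist (f i (e i a₀)) (f i v) :=
  le_antisymm (distJ_le amal hGconn hH hpar a₀)
    (distJ_le amal hGconn hH (parallel_symm hpar) a₀)

/-- Key lemma B: a vertex outside the copy of `G i` is equidistant from the endpoints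
of a parallel edge of `G i`. -/
lemma dist_eq_of_not_mem (amal : IsAmalgamation J G H e f) (hGconn : ∀ i, (G i).Connected)
    (hH : H.Connected) {i : ι} {u v : Vg i}
    (hpar : ParallelEdge (G i) (e i) u v) {t : W} (ht : t ∉ Set.range (f i)) :
    H.dist t (f i u) = H.dist t (f i v) := by
  have key : ∀ (u' v' : Vg i), ParallelEdge (G i) (e i) u' v' →
      H.dist t (f i u') ≤ H.dist t (f i v') := by
    intro u' v' hpar'
    obtain ⟨p, hp⟩ := hH.exists_walk_length_eq_dist t (f i v')
    obtain ⟨z, w1, q, r, hadj, hz, hq, _, hlen⟩ :=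
      firstCross (fun w => ∃ x, f i x = w) p (fun ⟨x, hx⟩ => ht ⟨x, hx⟩) ⟨v', rfl⟩
    obtain ⟨c, hc⟩ := cross_isJ amal i hadj (hq w1 (Walk.end_mem_support q)) hz
    subst hc
    have htz : H.dist t (f i (e i c)) ≤ q.length + 1 := by
      calc H.dist t (f i (e i c)) ≤ (q.concat hadj).length := dist_le _
        _ = q.length + 1 := Walk.length_concat q hadj
    calc H.dist t (f i u')
        ≤ H.dist t (f i (e i c)) + H.dist (f i (e i c)) (f i u') := hH.dist_triangle
      _ = H.dist t (f i (e i c)) + H.dist (f i (e i c)) (f i v') := by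
          rw [distJ amal hGconn hH hpar' c]
      _ ≤ (q.length + 1) + r.length := Nat.add_le_add htz (dist_le r)
      _ = p.length := hlen
      _ = H.dist t (f i v') := hp
  exact le_antisymm (key u v hpar) (key v u (parallel_symm hpar))

end Aux

/-- A set `T` of vertices of the amalgamation `H` distinguishes the union of all
parallel edges iff, for each `i`, the part of `T` lying in `G i` distinguishes
the parallel edges of `G i`. -/
theorem stmt_5 {ι VJ W : Type*} {Vg : ι → Type*}
    (J : SimpleGraph VJ) (G : ∀ i, SimpleGraph (Vg i)) (H : SimpleGraph W)
    (e : ∀ i, VJ → Vg i) (f : ∀ i, Vg i → W)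
    (amal : IsAmalgamation J G H e f)
    (hGconn : ∀ i, (G i).Connected) (hH : H.Connected)
    (T : Set W) :
    (∀ i (u v : Vg i), ParallelEdge (G i) (e i) u v →
        ∃ t ∈ T, H.dist t (f i u) ≠ H.dist t (f i v)) ↔
      (∀ i (u v : Vg i), ParallelEdge (G i) (e i) u v →
        ∃ t ∈ T ∩ Set.range (f i), H.dist t (f i u) ≠ H.dist t (f i v)) := by
  constructor
  · intro h i u v hpar
    obtain ⟨t, htT, htd⟩ := h i u v hpar
    refine ⟨t, ⟨htT, ?_⟩, htd⟩
    by_contra ht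
    exact htd (dist_eq_of_not_mem amal hGconn hH hpar ht)
  · intro h i u v hpar
    obtain ⟨t, ⟨htT, _⟩, htd⟩ := h i u v hpar
    exact ⟨t, htT, htd⟩
end

section
/- Let {G_i} be a family of connected graphs with common induced subgraph J, with embeddings ι_i : J → G_i, and let H be their amalgamation over J. Then each G_i is isometrically embedded in H (i.e., d_{G_i}(u,v) = d_H(u,v) for all u,v ∈ V(G_i)) if and only if the family is isometric, meaning for all i,j and all a,b ∈ V(J), d_{G_i}(ι_i(a),ι_i(b)) = d_{G_j}(ι_j(a),ι_j(b)). -/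
open SimpleGraph

/-- Key lemma: any walk in the amalgamation from a vertex of copy `i` to a vertex of
copy `j` either witnesses a short connection through `J`, or its end lies in copy `i`
with small in-copy distance. -/
lemma amal_key {ι VJ W : Type*} {Vg : ι → Type*}
    {J : SimpleGraph VJ} {G : ∀ i, SimpleGraph (Vg i)} {H : SimpleGraph W}
    {e : ∀ i, VJ → Vg i} {f : ∀ i, Vg i → W}
    (amal : IsAmalgamation J G H e f)
    (hGconn : ∀ i, (G i).Connected)
    (hiso : ∀ i j (a b : VJ), (G i).dist (e i a) (e i b) = (G j).dist (e j a) (e j b)) :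
    ∀ {u v : W} (p : H.Walk u v) (i j : ι) (x : Vg i) (y : Vg j),
      f i x = u → f j y = v →
      (∃ c, (G i).dist x (e i c) + (G j).dist (e j c) y ≤ p.length) ∨
      (∃ y' : Vg i, f i y' = v ∧ (G i).dist x y' ≤ p.length) := by
  intro u v p
  induction p with
  | nil =>
    intro i j x y hx hy
    right
    exact ⟨x, hx.trans (by rfl), by simp [SimpleGraph.dist_self]⟩
  | @cons u w v hadj p ih =>
    intro i j x y hx hy
    obtain ⟨k, a, b, hua, hwb⟩ := amal.edge_mem u w hadj
    have hab : (G k).Adj a b := (amal.f_ind k a b).mp (hua ▸ hwb ▸ hadj)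
    have hdab : (G k).dist a b ≤ 1 := SimpleGraph.dist_le hab.toWalk
    have := ih k j b y hwb.symm hy
    by_cases hik : i = k
    · subst hik
      have hxa : x = a := amal.f_inj i (hx.trans hua)
      subst hxa
      rcases this with ⟨c, hc⟩ | ⟨y', hy', hd⟩
      · left
        refine ⟨c, ?_⟩
        have : (G i).dist x (e i c) ≤ (G i).dist x b + (G i).dist b (e i c) :=
          (hGconn i).dist_triangle
        simp only [SimpleGraph.Walk.length_cons]
        omega
      · right
        refine ⟨y', hy', ?_⟩
        have : (G i).dist x y' ≤ (G i).dist x b + (G i).dist b y' :=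
          (hGconn i).dist_triangle
        simp only [SimpleGraph.Walk.length_cons]
        omega
    · obtain ⟨c0, hxc0, hac0⟩ := amal.inter i k x a hik (hx.trans hua)
      subst hxc0; subst hac0
      rcases this with ⟨c, hc⟩ | ⟨y', hy', hd⟩
      · -- D k j b y small, transfer through c0, c using isometry
        left
        refine ⟨c, ?_⟩
        have h1 : (G i).dist (e i c0) (e i c) = (G k).dist (e k c0) (e k c) := hiso i k c0 c
        have h2 : (G k).dist (e k c0) (e k c) ≤ (G k).dist (e k c0) b + (G k).dist b (e k c) :=
          (hGconn k).dist_triangle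
        simp only [SimpleGraph.Walk.length_cons]
        omega
      · -- end lies in copy k
        by_cases hjk : j = k
        · subst hjk
          have hyy' : y = y' := amal.f_inj j (hy.trans hy'.symm)
          subst hyy'
          left
          refine ⟨c0, ?_⟩
          have h2 : (G j).dist (e j c0) y ≤ (G j).dist (e j c0) b + (G j).dist b y :=
            (hGconn j).dist_triangle
          simp only [SimpleGraph.Walk.length_cons, SimpleGraph.dist_self]
          omega
        · obtain ⟨c1, hyc1, hy'c1⟩ := amal.inter j k y y' hjk (hy.trans hy'.symm)
          subst hyc1; subst hy'c1
          left
          refine ⟨c1, ?_⟩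
          have h1 : (G i).dist (e i c0) (e i c1) = (G k).dist (e k c0) (e k c1) := hiso i k c0 c1
          have h2 : (G k).dist (e k c0) (e k c1) ≤ (G k).dist (e k c0) b + (G k).dist b (e k c1) :=
            (hGconn k).dist_triangle
          simp only [SimpleGraph.Walk.length_cons, SimpleGraph.dist_self]
          omega

/-- The graphs `G i` are isometrically embedded in the amalgamation `H` iff the family
is isometric: distances between the copies of `J`-vertices agree across the family. -/
theorem stmt_8 {ι VJ W : Type*} [Nonempty VJ] {Vg : ι → Type*}
    (J : SimpleGraph VJ) (G : ∀ i, SimpleGraph (Vg i)) (H : SimpleGraph W)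
    (e : ∀ i, VJ → Vg i) (f : ∀ i, Vg i → W)
    (amal : IsAmalgamation J G H e f)
    (hGconn : ∀ i, (G i).Connected) :
    (∀ i (x y : Vg i), (G i).dist x y = H.dist (f i x) (f i y)) ↔
      (∀ i j (a b : VJ), (G i).dist (e i a) (e i b) = (G j).dist (e j a) (e j b)) := by
  constructor
  · intro h i j a b
    calc (G i).dist (e i a) (e i b) = H.dist (f i (e i a)) (f i (e i b)) := h i _ _
      _ = H.dist (f j (e j a)) (f j (e j b)) := by rw [amal.compat i j a, amal.compat i j b]
      _ = (G j).dist (e j a) (e j b) := (h j _ _).symm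
  · intro hiso i x y
    let hom : G i →g H := ⟨f i, fun h => (amal.f_ind i _ _).mpr h⟩
    have hcoe : ⇑hom = f i := rfl
    obtain ⟨p, hp⟩ := (hGconn i).exists_walk_length_eq_dist x y
    have hle : H.dist (f i x) (f i y) ≤ (G i).dist x y := by
      have h0 := SimpleGraph.dist_le (p.map hom)
      rw [SimpleGraph.Walk.length_map, hp, hcoe] at h0
      exact h0
    have hreach : H.Reachable (f i x) (f i y) := hcoe ▸ ⟨p.map hom⟩
    obtain ⟨q, hq⟩ := hreach.exists_walk_length_eq_dist
    have hge : (G i).dist x y ≤ H.dist (f i x) (f i y) := by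
      rcases amal_key amal hGconn hiso q i i x y rfl rfl with ⟨c, hc⟩ | ⟨y', hy', hd⟩
      · have h2 : (G i).dist x y ≤ (G i).dist x (e i c) + (G i).dist (e i c) y :=
          (hGconn i).dist_triangle
        omega
      · have : y' = y := amal.f_inj i hy'
        subst this
        omega
    omega
end

section
/- Let {G_i} be connected graphs with common induced subgraph J, and let H be their amalgamation over J. If the diameter of J is at most 2, then every G_i is isometrically embedded in H. -/
open SimpleGraph

/-!
A walk in `H` between two vertices of `G i` lifts to a walk in `G i` that is no longer, by
induction on its length. Edges of `H` inside `G i` are kept. A maximal excursion outside `G i`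
must leave and re-enter `G i` through copies of `J`, since every edge of `H` lies in a single
`G k` and two `G k` meet only in `J`; the excursion has at least two edges, while its endpoints
are joined by a path of length at most 2 in `J`, hence in `G i`.
-/

namespace SimpleGraph

variable {V V' : Type*} {G : SimpleGraph V} {G' : SimpleGraph V'}

theorem Walk.exists_adj_split_of_notMem_of_mem {S : Set V} {u v : V} (q : G.Walk u v)
    (hu : u ∉ S) (hv : v ∈ S) :
    ∃ (t s : V) (q₁ : G.Walk u t) (q₂ : G.Walk s v),
      t ∉ S ∧ s ∈ S ∧ G.Adj t s ∧ q₁.length + 1 + q₂.length = q.length := by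
  induction q with
  | nil => exact absurd hv hu
  | @cons u w v h q ih =>
    by_cases hw : w ∈ S
    · exact ⟨u, w, .nil, q, hu, hw, h, by simp [Nat.add_comm]⟩
    · obtain ⟨t, s, q₁, q₂, ht, hs, hts, hlen⟩ := ih hw hv
      exact ⟨t, s, .cons h q₁, q₂, ht, hs, hts, by simp only [Walk.length_cons]; omega⟩

theorem dist_map_eq_of_forall_exists_walk (φ : G →g G')
    (hlift : ∀ x y (q : G'.Walk (φ x) (φ y)), ∃ p : G.Walk x y, p.length ≤ q.length)
    (x y : V) : G'.dist (φ x) (φ y) = G.dist x y := by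
  by_cases hr : G.Reachable x y
  · obtain ⟨p, hp⟩ := hr.exists_walk_length_eq_dist
    obtain ⟨q, hq⟩ := (hr.map φ).exists_walk_length_eq_dist
    obtain ⟨p', hp'⟩ := hlift x y q
    have := G.dist_le p'
    have := G'.dist_le (p.map φ)
    rw [Walk.length_map] at this
    omega
  · have hr' : ¬G'.Reachable (φ x) (φ y) := fun ⟨q⟩ ↦ hr ⟨(hlift x y q).choose⟩
    rw [dist_eq_zero_of_not_reachable hr, dist_eq_zero_of_not_reachable hr']

end SimpleGraph

namespace IsAmalgamation

variable {ι VJ W : Type*} {Vg : ι → Type*}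
    {J : SimpleGraph VJ} {G : ∀ i, SimpleGraph (Vg i)} {H : SimpleGraph W}
    {e : ∀ i, VJ → Vg i} {f : ∀ i, Vg i → W}

def embJ (amal : IsAmalgamation J G H e f) (i : ι) : J ↪g G i where
  toFun := e i
  inj' := amal.e_inj i
  map_rel_iff' := amal.e_ind i _ _

def embH (amal : IsAmalgamation J G H e f) (i : ι) : G i ↪g H where
  toFun := f i
  inj' := amal.f_inj i
  map_rel_iff' := amal.f_ind i _ _

theorem exists_eq_of_adj_of_notMem_range (amal : IsAmalgamation J G H e f) {i : ι} {x : Vg i}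
    {w : W} (h : H.Adj (f i x) w) (hw : w ∉ Set.range (f i)) : ∃ c, x = e i c := by
  obtain ⟨k, a, b, hxa, rfl⟩ := amal.edge_mem _ _ h
  have hki : k ≠ i := by rintro rfl; exact hw ⟨b, rfl⟩
  obtain ⟨c, hxc, -⟩ := amal.inter i k x a hki.symm hxa
  exact ⟨c, hxc⟩

theorem exists_walk_length_le_two (amal : IsAmalgamation J G H e f) (hJconn : J.Connected)
    (hdiam : ∀ a b : VJ, J.dist a b ≤ 2) (i : ι) (a b : VJ) :
    ∃ p : (G i).Walk (e i a) (e i b), p.length ≤ 2 := by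
  obtain ⟨r, hr⟩ := hJconn.exists_walk_length_eq_dist a b
  exact ⟨r.map (amal.embJ i).toHom, ((r.length_map _).trans hr).trans_le (hdiam a b)⟩

theorem exists_walk_length_le (amal : IsAmalgamation J G H e f) (hJconn : J.Connected)
    (hdiam : ∀ a b : VJ, J.dist a b ≤ 2) {i : ι} {x y : Vg i} (q : H.Walk (f i x) (f i y)) :
    ∃ p : (G i).Walk x y, p.length ≤ q.length := by
  induction hn : q.length using Nat.strong_induction_on generalizing x q with
  | _ n ih =>
  by_cases hnil : q.Nil
  · obtain rfl := amal.f_inj i hnil.eq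
    exact ⟨.nil, Nat.zero_le _⟩
  have hlen := q.length_tail_add_one hnil
  by_cases hw : q.snd ∈ Set.range (f i)
  · obtain ⟨z, hz⟩ := hw
    obtain ⟨p, hp⟩ := ih q.tail.length (by omega) (q.tail.copy hz.symm rfl) (Walk.length_copy ..)
    have hxz : (G i).Adj x z := (amal.f_ind i x z).mp (hz ▸ q.adj_snd hnil)
    exact ⟨.cons hxz p, by rw [Walk.length_cons]; omega⟩
  obtain ⟨c₁, rfl⟩ := amal.exists_eq_of_adj_of_notMem_range (q.adj_snd hnil) hw
  obtain ⟨t, s, q₁, q₂, ht, ⟨z, rfl⟩, hts, hlen'⟩ :=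
    q.tail.exists_adj_split_of_notMem_of_mem hw ⟨y, rfl⟩
  obtain ⟨c₂, rfl⟩ := amal.exists_eq_of_adj_of_notMem_range hts.symm ht
  obtain ⟨r, hr⟩ := amal.exists_walk_length_le_two hJconn hdiam i c₁ c₂
  obtain ⟨p, hp⟩ := ih q₂.length (by omega) q₂ rfl
  exact ⟨r.append p, by rw [Walk.length_append]; omega⟩

end IsAmalgamation

theorem stmt_9_general {ι VJ W : Type*} {Vg : ι → Type*}
    (J : SimpleGraph VJ) (G : ∀ i, SimpleGraph (Vg i)) (H : SimpleGraph W)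
    (e : ∀ i, VJ → Vg i) (f : ∀ i, Vg i → W)
    (amal : IsAmalgamation J G H e f)
    (hJconn : J.Connected) (hdiam : ∀ a b : VJ, J.dist a b ≤ 2) :
    ∀ i (x y : Vg i), (G i).dist x y = H.dist (f i x) (f i y) := fun i x y ↦
  (dist_map_eq_of_forall_exists_walk (amal.embH i).toHom
    (fun _ _ q ↦ amal.exists_walk_length_le hJconn hdiam q) x y).symm

/-- If the diameter of `J` is at most 2, then every `G i` is isometrically embedded
in the amalgamation `H`. -/
theorem stmt_9 {ι VJ W : Type*} [Nonempty VJ] {Vg : ι → Type*}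
    (J : SimpleGraph VJ) (G : ∀ i, SimpleGraph (Vg i)) (H : SimpleGraph W)
    (e : ∀ i, VJ → Vg i) (f : ∀ i, Vg i → W)
    (amal : IsAmalgamation J G H e f)
    (hGconn : ∀ i, (G i).Connected)
    (hJconn : J.Connected) (hdiam : ∀ a b : VJ, J.dist a b ≤ 2) :
    ∀ i (x y : Vg i), (G i).dist x y = H.dist (f i x) (f i y) :=
  stmt_9_general J G H e f amal hJconn hdiam
end

section
/- Let {(G_i|J_i)} be an isometric amalgamation family with amalgamation H. If A_i ⊆ V(G_i) is a local metric set for G_i for each i, then ⋃_i A_i is a local metric set for H. -/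
open SimpleGraph

/-- For an isometric amalgamation, the union of local metric sets of the `G i`
is a local metric set for `H`. -/
theorem stmt_11 {ι VJ W : Type*} {Vg : ι → Type*}
    (J : SimpleGraph VJ) (G : ∀ i, SimpleGraph (Vg i)) (H : SimpleGraph W)
    (e : ∀ i, VJ → Vg i) (f : ∀ i, Vg i → W)
    (amal : IsAmalgamation J G H e f)
    (hiso : ∀ i (x y : Vg i), (G i).dist x y = H.dist (f i x) (f i y))
    (A : ∀ i, Set (Vg i)) (hA : ∀ i, IsLocalMetricSet (G i) (A i)) :
    IsLocalMetricSet H (⋃ i, f i '' A i) := by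
  intro u v huv
  obtain ⟨i, a, b, rfl, rfl⟩ := amal.edge_mem u v huv
  obtain ⟨s, hs, hd⟩ := hA i a b ((amal.f_ind i a b).mp huv)
  exact ⟨f i s, Set.mem_iUnion.mpr ⟨i, Set.mem_image_of_mem _ hs⟩,
    by rw [← hiso, ← hiso]; exact hd⟩
end

section
/- Let {(G_i|J_i)} be an isometric amalgamation family with amalgamation H, and let T_i be a traversal for ∥(J_i:G_i) for each i. Then dim_l(H) ≤ min{ Σ_i dim_l(G_i), Σ_i |T_i| + |V(J)| }. -/
open SimpleGraph

/- Every edge of `H` lies in a single `G i`, and distances in `G i` are those of `H`, so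
a set distinguishes all edges of `H` once it distinguishes, for each `i`, the edges of
`G i`. Taking the union of optimal local metric sets of the `G i` gives the first bound.
For the second, an edge of `G i` that is not parallel to `J` is distinguished by a vertex
of the common copy of `J` (by one of its own endpoints if it meets `J`), and the parallel
ones are distinguished by `T i`. -/

lemma SimpleGraph.Adj.dist_self_ne {V : Type*} {G : SimpleGraph V} {u v : V}
    (h : G.Adj u v) : G.dist u u ≠ G.dist u v := by
  rw [dist_self, dist_eq_one_iff_adj.mpr h]
  exact zero_ne_one

lemma isLocalMetricSet_univ {V : Type*} (G : SimpleGraph V) :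
    IsLocalMetricSet G Set.univ :=
  fun _ _ h ↦ ⟨_, trivial, h.dist_self_ne⟩

lemma localMetricDim_le_ncard {V : Type*} {G : SimpleGraph V} {S : Set V}
    (h : IsLocalMetricSet G S) : localMetricDim G ≤ S.ncard :=
  Nat.sInf_le ⟨S, rfl, h⟩

lemma exists_isLocalMetricSet_ncard_eq {V : Type*} (G : SimpleGraph V) :
    ∃ S : Set V, S.ncard = localMetricDim G ∧ IsLocalMetricSet G S :=
  Nat.sInf_mem (s := {n | ∃ S : Set V, S.ncard = n ∧ IsLocalMetricSet G S})
    ⟨_, Set.univ, rfl, isLocalMetricSet_univ G⟩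

lemma exists_dist_ne_of_not_parallelEdge {VJ V : Type*} {G : SimpleGraph V}
    {e : VJ → V} {u v : V} (huv : G.Adj u v) (hpar : ¬ParallelEdge G e u v) :
    ∃ c, G.dist (e c) u ≠ G.dist (e c) v := by
  by_cases hu : u ∈ Set.range e
  · obtain ⟨c, rfl⟩ := hu
    exact ⟨c, huv.dist_self_ne⟩
  by_cases hv : v ∈ Set.range e
  · obtain ⟨c, rfl⟩ := hv
    exact ⟨c, huv.symm.dist_self_ne.symm⟩
  by_contra! h
  exact hpar ⟨huv, hu, hv, h⟩

lemma ncard_iUnion_range_le_of_forall_eq {ι α β : Type*} [Finite α] (g : ι → α → β)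
    (hg : ∀ i j a, g i a = g j a) : (⋃ i, Set.range (g i)).ncard ≤ Nat.card α := by
  rcases isEmpty_or_nonempty ι with hι | ⟨⟨i₀⟩⟩
  · simp
  have hsub : ⋃ i, Set.range (g i) ⊆ Set.range (g i₀) :=
    Set.iUnion_subset fun i ↦ Set.range_subset_iff.mpr fun a ↦ ⟨a, hg i₀ i a⟩
  calc (⋃ i, Set.range (g i)).ncard ≤ (Set.range (g i₀)).ncard :=
        Set.ncard_le_ncard hsub (Set.finite_range _)
    _ ≤ Nat.card α := by
        rw [← Set.image_univ, ← Set.ncard_univ]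
        exact Set.ncard_image_le Set.finite_univ

namespace IsAmalgamation

variable {ι VJ W : Type*} {Vg : ι → Type*} {J : SimpleGraph VJ} {G : ∀ i, SimpleGraph (Vg i)}
  {H : SimpleGraph W} {e : ∀ i, VJ → Vg i} {f : ∀ i, Vg i → W}

lemma isLocalMetricSet_of_forall (amal : IsAmalgamation J G H e f) {S : Set W}
    (hS : ∀ i a b, (G i).Adj a b → ∃ s ∈ S, H.dist s (f i a) ≠ H.dist s (f i b)) :
    IsLocalMetricSet H S := by
  intro u v huv
  obtain ⟨i, a, b, rfl, rfl⟩ := amal.edge_mem u v huv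
  exact hS i a b ((amal.f_ind i a b).mp huv)

lemma ncard_iUnion_image_le [Fintype ι] (amal : IsAmalgamation J G H e f)
    (S : ∀ i, Set (Vg i)) : (⋃ i, f i '' S i).ncard ≤ ∑ i, (S i).ncard := by
  refine (Set.ncard_iUnion_le_of_fintype _).trans_eq (Finset.sum_congr rfl fun i _ ↦ ?_)
  exact Set.ncard_image_of_injective _ (amal.f_inj i)

lemma localMetricDim_le_sum [Fintype ι] (amal : IsAmalgamation J G H e f)
    (hiso : ∀ i (x y : Vg i), (G i).dist x y = H.dist (f i x) (f i y)) :
    localMetricDim H ≤ ∑ i, localMetricDim (G i) := by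
  choose S hScard hS using fun i ↦ exists_isLocalMetricSet_ncard_eq (G i)
  have hloc : IsLocalMetricSet H (⋃ i, f i '' S i) := by
    refine amal.isLocalMetricSet_of_forall fun i a b hab ↦ ?_
    obtain ⟨s, hs, hne⟩ := hS i a b hab
    exact ⟨f i s, Set.mem_iUnion.mpr ⟨i, s, hs, rfl⟩, by rwa [← hiso, ← hiso]⟩
  calc localMetricDim H ≤ (⋃ i, f i '' S i).ncard := localMetricDim_le_ncard hloc
    _ ≤ ∑ i, (S i).ncard := amal.ncard_iUnion_image_le S
    _ = ∑ i, localMetricDim (G i) := Finset.sum_congr rfl fun i _ ↦ hScard i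

lemma localMetricDim_le_sum_add_card [Fintype ι] [Fintype VJ]
    (amal : IsAmalgamation J G H e f)
    (hiso : ∀ i (x y : Vg i), (G i).dist x y = H.dist (f i x) (f i y))
    (T : ∀ i, Set (Vg i))
    (hT : ∀ i u v, ParallelEdge (G i) (e i) u v →
      ∃ t ∈ T i, H.dist (f i t) (f i u) ≠ H.dist (f i t) (f i v)) :
    localMetricDim H ≤ (∑ i, (T i).ncard) + Fintype.card VJ := by
  set JH : Set W := ⋃ i, Set.range (f i ∘ e i)
  have hloc : IsLocalMetricSet H ((⋃ i, f i '' T i) ∪ JH) := by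
    refine amal.isLocalMetricSet_of_forall fun i a b hab ↦ ?_
    by_cases hpar : ParallelEdge (G i) (e i) a b
    · obtain ⟨t, ht, hne⟩ := hT i a b hpar
      exact ⟨f i t, Or.inl (Set.mem_iUnion.mpr ⟨i, t, ht, rfl⟩), hne⟩
    · obtain ⟨c, hne⟩ := exists_dist_ne_of_not_parallelEdge hab hpar
      exact ⟨f i (e i c), Or.inr (Set.mem_iUnion.mpr ⟨i, c, rfl⟩), by rwa [← hiso, ← hiso]⟩
  calc localMetricDim H ≤ ((⋃ i, f i '' T i) ∪ JH).ncard := localMetricDim_le_ncard hloc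
    _ ≤ (⋃ i, f i '' T i).ncard + JH.ncard := Set.ncard_union_le _ _
    _ ≤ (∑ i, (T i).ncard) + Fintype.card VJ := by
        gcongr
        · exact amal.ncard_iUnion_image_le T
        · rw [← Nat.card_eq_fintype_card]
          exact ncard_iUnion_range_le_of_forall_eq _ fun i j a ↦ amal.compat i j a

end IsAmalgamation

theorem stmt_12_general {ι VJ W : Type*} [Fintype ι] [Fintype VJ] {Vg : ι → Type*}
    (J : SimpleGraph VJ) (G : ∀ i, SimpleGraph (Vg i)) (H : SimpleGraph W)
    (e : ∀ i, VJ → Vg i) (f : ∀ i, Vg i → W)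
    (amal : IsAmalgamation J G H e f)
    (hiso : ∀ i (x y : Vg i), (G i).dist x y = H.dist (f i x) (f i y))
    (T : ∀ i, Set (Vg i))
    (hT : ∀ i, (∀ x ∈ T i, x ∉ Set.range (e i)) ∧
      ∀ u v : Vg i, ParallelEdge (G i) (e i) u v →
        ∃ t ∈ T i, H.dist (f i t) (f i u) ≠ H.dist (f i t) (f i v)) :
    localMetricDim H ≤
      min (∑ i, localMetricDim (G i)) ((∑ i, (T i).ncard) + Fintype.card VJ) :=
  le_min (amal.localMetricDim_le_sum hiso)
    (amal.localMetricDim_le_sum_add_card hiso T fun i ↦ (hT i).2)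

/-- Upper bound for an isometric amalgamation:
`dim_l(H) ≤ min { Σ dim_l(G i), Σ |T i| + |V(J)| }`. -/
theorem stmt_12 {ι VJ W : Type*} [Fintype ι] [Fintype VJ] [Fintype W] {Vg : ι → Type*}
    (J : SimpleGraph VJ) (G : ∀ i, SimpleGraph (Vg i)) (H : SimpleGraph W)
    (e : ∀ i, VJ → Vg i) (f : ∀ i, Vg i → W)
    (amal : IsAmalgamation J G H e f)
    (hGconn : ∀ i, (G i).Connected)
    (hiso : ∀ i (x y : Vg i), (G i).dist x y = H.dist (f i x) (f i y))
    (T : ∀ i, Set (Vg i))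
    (hT : ∀ i, (∀ x ∈ T i, x ∉ Set.range (e i)) ∧
      ∀ u v : Vg i, ParallelEdge (G i) (e i) u v →
        ∃ t ∈ T i, H.dist (f i t) (f i u) ≠ H.dist (f i t) (f i v))
    (hTmin : ∀ i (T' : Set (Vg i)),
      ((∀ x ∈ T', x ∉ Set.range (e i)) ∧
        ∀ u v : Vg i, ParallelEdge (G i) (e i) u v →
          ∃ t ∈ T', H.dist (f i t) (f i u) ≠ H.dist (f i t) (f i v)) →
      (T i).ncard ≤ T'.ncard) :
    localMetricDim H ≤
      min (∑ i, localMetricDim (G i)) ((∑ i, (T i).ncard) + Fintype.card VJ) :=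
  stmt_12_general J G H e f amal hiso T hT
end

section
/- Let {(G_i|J_i)} be an isometric amalgamation family with amalgamation H. Suppose uv ∈ E(G_i) with d_H(u,J) < d_H(v,J) (uv is solvable by J), and let c ∈ V(J) with d_H(u,c) = d_H(u,J). Then c distinguishes u and v, i.e., d_H(c,u) ≠ d_H(c,v). Moreover, if for some j ≠ i there is s ∈ V(G_j) with d_H(s,c) = d_H(s,J), then s also distinguishes u and v. -/
open SimpleGraph

lemma walk_through_J {ι VJ W : Type*} {Vg : ι → Type*}
    {J : SimpleGraph VJ} {G : ∀ i, SimpleGraph (Vg i)} {H : SimpleGraph W}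
    {e : ∀ i, VJ → Vg i} {f : ∀ i, Vg i → W}
    (amal : IsAmalgamation J G H e f) (i₀ i : ι) {x y : W}
    (p : H.Walk x y) (hx : x ∉ Set.range (f i)) (hy : y ∈ Set.range (f i)) :
    ∃ a, f i₀ (e i₀ a) ∈ p.support := by
  induction p with
  | nil => exact absurd hy hx
  | @cons x x' y h q ih =>
    obtain ⟨k, p', q', hxk, hx'k⟩ := amal.edge_mem _ _ h
    have hki : k ≠ i := by rintro rfl; exact hx ⟨p', hxk.symm⟩
    by_cases hx' : x' ∈ Set.range (f i)
    · obtain ⟨z, hz⟩ := hx'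
      obtain ⟨a, ha, ha'⟩ := amal.inter k i q' z hki (hx'k ▸ hz.symm)
      refine ⟨a, ?_⟩
      have : x' = f i₀ (e i₀ a) := by
        rw [hx'k, ha, amal.compat k i₀ a]
      rw [SimpleGraph.Walk.support_cons]
      exact List.mem_cons_of_mem _ (this ▸ q.start_mem_support)
    · obtain ⟨a, ha⟩ := ih hx' hy
      exact ⟨a, by rw [SimpleGraph.Walk.support_cons]; exact List.mem_cons_of_mem _ ha⟩

lemma dist_split {V : Type*} {G : SimpleGraph V} {x y w : V}
    (p : G.Walk x y) (hp : p.length = G.dist x y) (hw : w ∈ p.support) :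
    G.dist x w + G.dist w y ≤ G.dist x y := by
  classical
  have h1 : G.dist x w ≤ (p.takeUntil w hw).length := SimpleGraph.dist_le _
  have h2 : G.dist w y ≤ (p.dropUntil w hw).length := SimpleGraph.dist_le _
  have h3 : (p.takeUntil w hw).length + (p.dropUntil w hw).length = p.length := by
    rw [← SimpleGraph.Walk.length_append, p.take_spec hw]
  omega

/-- If `uv` is an edge solvable by `J` (i.e. `d(u,J) < d(v,J)`) and `c ∈ V(J)`
realizes `d(u,J)`, then `c` distinguishes `u` and `v`; moreover any vertex `s` of
another `G j` whose distance to `J` is realized by `c` also distinguishes `u,v`. -/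
theorem stmt_15 {ι VJ W : Type*} {Vg : ι → Type*}
    (J : SimpleGraph VJ) (G : ∀ i, SimpleGraph (Vg i)) (H : SimpleGraph W)
    (e : ∀ i, VJ → Vg i) (f : ∀ i, Vg i → W)
    (amal : IsAmalgamation J G H e f)
    (hGconn : ∀ i, (G i).Connected) (hH : H.Connected)
    (hiso : ∀ i (x y : Vg i), (G i).dist x y = H.dist (f i x) (f i y))
    (i₀ : ι)
    (dJ : W → ℕ)
    (hdJ : ∀ w, dJ w = sInf (Set.range fun a : VJ => H.dist w (f i₀ (e i₀ a))))
    (i : ι) (u v : Vg i) (huv : (G i).Adj u v)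
    (hsolv : dJ (f i u) < dJ (f i v))
    (c : VJ) (hc : H.dist (f i u) (f i₀ (e i₀ c)) = dJ (f i u)) :
    H.dist (f i₀ (e i₀ c)) (f i u) ≠ H.dist (f i₀ (e i₀ c)) (f i v) ∧
      ∀ j, j ≠ i → ∀ s : Vg j,
        H.dist (f j s) (f i₀ (e i₀ c)) = dJ (f j s) →
        H.dist (f j s) (f i u) ≠ H.dist (f j s) (f i v) := by
  have hle : ∀ (w : W) (a : VJ), dJ w ≤ H.dist w (f i₀ (e i₀ a)) := by
    intro w a
    rw [hdJ w]
    exact Nat.sInf_le ⟨a, rfl⟩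
  -- lower bound lemma
  have hlow : ∀ (j : ι), j ≠ i → ∀ (s : Vg j) (t : Vg i),
      dJ (f j s) + dJ (f i t) ≤ H.dist (f j s) (f i t) := by
    intro j hj s t
    by_cases hs : f j s ∈ Set.range fun a => f i₀ (e i₀ a)
    · obtain ⟨a, ha⟩ := hs
      have ha' : f i₀ (e i₀ a) = f j s := ha
      have h0 : dJ (f j s) = 0 := by
        have h := hle (f j s) a
        rw [ha', SimpleGraph.dist_self] at h
        omega
      have h := hle (f i t) a
      rw [ha', SimpleGraph.dist_comm] at h
      omega
    · obtain ⟨p, hp⟩ := hH.exists_walk_length_eq_dist (f j s) (f i t)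
      have hx : f j s ∉ Set.range (f i) := by
        rintro ⟨z, hz⟩
        obtain ⟨a, ha, ha'⟩ := amal.inter i j z s hj.symm hz
        exact hs ⟨a, by rw [ha', amal.compat j i₀ a]⟩
      obtain ⟨a, ha⟩ := walk_through_J amal i₀ i p hx ⟨t, rfl⟩
      have hsplit := dist_split p hp ha
      have h1 := hle (f j s) a
      have h2 := hle (f i t) a
      rw [SimpleGraph.dist_comm] at h2
      omega
  constructor
  · have h1 : H.dist (f i₀ (e i₀ c)) (f i u) = dJ (f i u) := by
      rw [SimpleGraph.dist_comm]; exact hc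
    have h2 : dJ (f i v) ≤ H.dist (f i₀ (e i₀ c)) (f i v) := by
      rw [SimpleGraph.dist_comm]; exact hle _ c
    omega
  · intro j hj s hs
    have hup : H.dist (f j s) (f i u) ≤ dJ (f j s) + dJ (f i u) := by
      calc H.dist (f j s) (f i u)
          ≤ H.dist (f j s) (f i₀ (e i₀ c)) + H.dist (f i₀ (e i₀ c)) (f i u) :=
            hH.dist_triangle
        _ = dJ (f j s) + dJ (f i u) := by rw [hs, SimpleGraph.dist_comm, hc]
    have h1 := hlow j hj s v
    omega
end

section
/- Let J be a graph with chromatic number χ(J) ≥ 2 and let m ≥ χ(J). Then there exists a graph G such that J is an induced subgraph of G, dim_l(G) = m, and G has a local metric basis B with B ∩ V(J) = ∅. -/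
open SimpleGraph

/-!
Colour `J` properly with `m` colours and, for every colour `i`, add a triangle `aᵢ bᵢ cᵢ`, where
`cᵢ` is also joined to the vertices of `J` not coloured `i` and to every other `cⱼ`. The vertices
`aᵢ` and `bᵢ` are adjacent twins, so no vertex other than themselves tells them apart and every
local metric set meets each `{aᵢ, bᵢ}`: hence `dim_l ≥ m`. Conversely `{a₁, …, aₘ}` is a local
metric set. An edge `uv` of `J` is resolved by `a_{col u}`, which reaches `v` through `c_{col u}`
in two steps but has no common neighbour with `u`; the edges `bᵢcᵢ` are resolved by any `aⱼ` with
`j ≠ i` (which needs `m ≥ 2`), and every other edge has exactly one endpoint adjacent or equal to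
some `aᵢ`.
-/

namespace SimpleGraph

variable {V W : Type*} {G : SimpleGraph V} {G' : SimpleGraph W} {s u v a b : V}

theorem dist_eq_two_iff :
    G.dist u v = 2 ↔ u ≠ v ∧ ¬ G.Adj u v ∧ (G.commonNeighbors u v).Nonempty := by
  rw [dist, ENat.toNat_eq_iff two_ne_zero]
  exact edist_eq_two_iff

theorem dist_self_ne_of_adj (h : G.Adj u v) : G.dist u u ≠ G.dist u v := by
  simp [dist_eq_one_iff_adj.mpr h]

theorem dist_ne_dist_of_adj_of_not_adj (hu : G.Adj s u) (hv : ¬ G.Adj s v) :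
    G.dist s u ≠ G.dist s v := by
  rwa [dist_eq_one_iff_adj.mpr hu, ne_comm, Ne, dist_eq_one_iff_adj]

theorem Hom.edist_le (f : G →g G') (u v : V) : G'.edist (f u) (f v) ≤ G.edist u v :=
  le_iInf fun p => by simpa using SimpleGraph.edist_le (p.map f)

theorem Iso.edist_eq (f : G ≃g G') (u v : V) : G'.edist (f u) (f v) = G.edist u v := by
  refine le_antisymm (Hom.edist_le f.toHom u v) ?_
  simpa using Hom.edist_le f.symm.toHom (f u) (f v)

theorem Iso.dist_eq (f : G ≃g G') (u v : V) : G'.dist (f u) (f v) = G.dist u v := by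
  simp only [dist, f.edist_eq]

def AreTwins (G : SimpleGraph V) (a b : V) : Prop :=
  ∀ x, x ≠ a → x ≠ b → (G.Adj x a ↔ G.Adj x b)

def AreTwins.swapIso [DecidableEq V] (h : G.AreTwins a b) : G ≃g G where
  toEquiv := Equiv.swap a b
  map_rel_iff' := by
    intro x y
    simp only [Equiv.swap_apply_def]
    split_ifs <;> subst_vars <;> grind [AreTwins, G.adj_comm, G.irrefl]

theorem AreTwins.dist_eq (h : G.AreTwins a b) (hsa : s ≠ a) (hsb : s ≠ b) :
    G.dist s a = G.dist s b := by
  classical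
  simpa [AreTwins.swapIso, Equiv.swap_apply_of_ne_of_ne hsa hsb] using (h.swapIso.dist_eq s a).symm

end SimpleGraph

section LocalMetricSet

variable {V : Type*} {G : SimpleGraph V} {S : Set V}

theorem IsLocalMetricSet.mem_or_mem_of_areTwins (hS : IsLocalMetricSet G S) {a b : V}
    (hab : G.Adj a b) (htwin : G.AreTwins a b) : a ∈ S ∨ b ∈ S := by
  obtain ⟨s, hs, hne⟩ := hS a b hab
  by_contra! h
  exact hne (htwin.dist_eq (ne_of_mem_of_not_mem hs h.1) (ne_of_mem_of_not_mem hs h.2))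

theorem IsLocalMetricSet.card_le_ncard [Finite V] {ι : Type*} (hS : IsLocalMetricSet G S)
    {a b : ι → V} (hab : ∀ i, G.Adj (a i) (b i)) (htwin : ∀ i, G.AreTwins (a i) (b i))
    (hdisj : Pairwise fun i j => Disjoint ({a i, b i} : Set V) {a j, b j}) :
    Nat.card ι ≤ S.ncard := by
  have hpick (i : ι) : ∃ s ∈ S, s ∈ ({a i, b i} : Set V) := by
    rcases hS.mem_or_mem_of_areTwins (hab i) (htwin i) with h | h
    exacts [⟨_, h, .inl rfl⟩, ⟨_, h, .inr rfl⟩]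
  choose f hfS hf using hpick
  have hinj : f.Injective := fun i j hij =>
    by_contra fun hne => Set.disjoint_left.mp (hdisj hne) (hf i) (hij ▸ hf j)
  rw [← Nat.card_coe_set_eq]
  exact Nat.card_le_card_of_injective (fun i => ⟨f i, hfS i⟩) fun i j h =>
    hinj (congrArg Subtype.val h)

theorem localMetricDim_eq (hS : IsLocalMetricSet G S) {n : ℕ} (hcard : S.ncard = n)
    (hmin : ∀ T, IsLocalMetricSet G T → n ≤ T.ncard) : localMetricDim G = n :=
  le_antisymm (Nat.sInf_le ⟨S, hcard, hS⟩)
    (le_csInf ⟨_, S, hcard, hS⟩ fun _ ⟨T, hT, hTS⟩ => hT ▸ hmin T hTS)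

end LocalMetricSet

section TriangleGraph

variable {V ι : Type*} (J : SimpleGraph V) (col : V → ι)

/-- The vertices `(i, 0)`, `(i, 1)`, `(i, 2)` are `aᵢ`, `bᵢ`, `cᵢ`. -/
def triangleGraph : SimpleGraph (V ⊕ ι × Fin 3) where
  Adj
    | .inl u, .inl v => J.Adj u v
    | .inl v, .inr (i, k) | .inr (i, k), .inl v => k = 2 ∧ col v ≠ i
    | .inr (i, k), .inr (j, l) => (i = j ∧ k ≠ l) ∨ (i ≠ j ∧ k = 2 ∧ l = 2)
  symm := ⟨by
    rintro (u | ⟨i, k⟩) (v | ⟨j, l⟩) h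
    exacts [h.symm, h, h, by grind]⟩
  loopless := ⟨by
    rintro (u | ⟨i, k⟩) h
    exacts [J.irrefl h, by grind]⟩

variable {J col} {i j : ι} {k l : Fin 3} {u v : V} {x : V ⊕ ι × Fin 3}

@[simp]
theorem triangleGraph_adj_inl_inl : (triangleGraph J col).Adj (.inl u) (.inl v) ↔ J.Adj u v :=
  .rfl

@[simp]
theorem triangleGraph_adj_inl_inr :
    (triangleGraph J col).Adj (.inl v) (.inr (i, k)) ↔ k = 2 ∧ col v ≠ i :=
  .rfl

@[simp]
theorem triangleGraph_adj_inr_inl :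
    (triangleGraph J col).Adj (.inr (i, k)) (.inl v) ↔ k = 2 ∧ col v ≠ i :=
  .rfl

@[simp]
theorem triangleGraph_adj_inr_inr :
    (triangleGraph J col).Adj (.inr (i, k)) (.inr (j, l)) ↔
      (i = j ∧ k ≠ l) ∨ (i ≠ j ∧ k = 2 ∧ l = 2) :=
  .rfl

theorem triangleGraph_adj_inr_of_ne_two (hk : k ≠ 2) :
    (triangleGraph J col).Adj (.inr (i, k)) x ↔ ∃ l ≠ k, x = .inr (i, l) := by
  rcases x with v | ⟨j, l⟩ <;> simp [hk, eq_comm, and_comm]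

theorem triangleGraph_areTwins : (triangleGraph J col).AreTwins (.inr (i, 0)) (.inr (i, 1)) := by
  intro x hxa hxb
  rw [(triangleGraph J col).adj_comm x, (triangleGraph J col).adj_comm x,
    triangleGraph_adj_inr_of_ne_two (by decide), triangleGraph_adj_inr_of_ne_two (by decide)]
  constructor <;> rintro ⟨l, -, rfl⟩
  exacts [⟨l, fun h => hxb (h ▸ rfl), rfl⟩, ⟨l, fun h => hxa (h ▸ rfl), rfl⟩]

theorem triangleGraph_card_le_ncard [Finite V] [Finite ι] {S : Set (V ⊕ ι × Fin 3)}
    (hS : IsLocalMetricSet (triangleGraph J col) S) : Nat.card ι ≤ S.ncard :=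
  hS.card_le_ncard (a := fun i => .inr (i, 0)) (b := fun i => .inr (i, 1)) (fun _ => by simp)
    (fun _ => triangleGraph_areTwins) (fun i j hij => by simp [hij.symm])

theorem triangleGraph_dist_eq_two_iff (hx : ∀ l, x ≠ .inr (i, l)) :
    (triangleGraph J col).dist (.inr (i, 0)) x = 2 ↔
      (triangleGraph J col).Adj (.inr (i, 2)) x := by
  have hnbr (y : V ⊕ ι × Fin 3) :
      (triangleGraph J col).Adj (.inr (i, 0)) y ↔ ∃ l ≠ 0, y = .inr (i, l) :=
    triangleGraph_adj_inr_of_ne_two (by decide)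
  rw [dist_eq_two_iff]
  constructor
  · rintro ⟨-, -, w, hw⟩
    rw [mem_commonNeighbors, hnbr] at hw
    obtain ⟨⟨l, -, rfl⟩, hwx⟩ := hw
    by_cases hl : l = 2
    · exact hl ▸ hwx.symm
    · obtain ⟨l', -, rfl⟩ := (triangleGraph_adj_inr_of_ne_two hl).mp hwx.symm
      exact absurd rfl (hx l')
  · intro h
    refine ⟨(hx 0).symm, fun h' => ?_, .inr (i, 2), by simp, h.symm⟩
    obtain ⟨l, -, rfl⟩ := (hnbr x).mp h'
    exact hx l rfl

theorem triangleGraph_dist_inl_eq_two_iff :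
    (triangleGraph J col).dist (.inr (i, 0)) (.inl v) = 2 ↔ col v ≠ i := by
  rw [triangleGraph_dist_eq_two_iff] <;> simp

theorem triangleGraph_dist_inr_eq_two_iff (hij : i ≠ j) :
    (triangleGraph J col).dist (.inr (i, 0)) (.inr (j, l)) = 2 ↔ l = 2 := by
  rw [triangleGraph_dist_eq_two_iff] <;> simp [hij, hij.symm]

theorem triangleGraph_isLocalMetricSet [Nontrivial ι]
    (hcol : ∀ ⦃u v⦄, J.Adj u v → col u ≠ col v) :
    IsLocalMetricSet (triangleGraph J col) (Set.range fun i => .inr (i, 0)) := by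
  have hcross (v : V) (i : ι) (h : col v ≠ i) : ∃ s ∈ Set.range fun i => .inr (i, 0),
      (triangleGraph J col).dist s (.inl v) ≠ (triangleGraph J col).dist s (.inr (i, 2)) :=
    ⟨_, Set.mem_range_self i, (dist_ne_dist_of_adj_of_not_adj (by simp) (by simp)).symm⟩
  rintro (u | ⟨i, k⟩) (v | ⟨j, l⟩) huv
  · refine ⟨_, Set.mem_range_self (col u), ?_⟩
    have hv : (triangleGraph J col).dist (.inr (col u, 0)) (.inl v) = 2 :=
      triangleGraph_dist_inl_eq_two_iff.mpr (hcol huv).symm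
    have hu : (triangleGraph J col).dist (.inr (col u, 0)) (.inl u) ≠ 2 :=
      fun h => triangleGraph_dist_inl_eq_two_iff.mp h rfl
    rwa [hv]
  · obtain ⟨rfl, h⟩ := huv
    exact hcross u j h
  · obtain ⟨rfl, h⟩ := huv
    obtain ⟨s, hs, hne⟩ := hcross v i h
    exact ⟨s, hs, hne.symm⟩
  · rcases huv with ⟨rfl, hkl⟩ | ⟨hij, rfl, rfl⟩
    · by_cases h0 : k = 0 ∨ l = 0
      · refine ⟨_, Set.mem_range_self i, ?_⟩
        rcases h0 with rfl | rfl
        · exact dist_self_ne_of_adj (by simpa using hkl)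
        · exact (dist_self_ne_of_adj (by simpa using hkl.symm)).symm
      · obtain ⟨j, hji⟩ := exists_ne i
        refine ⟨_, Set.mem_range_self j, fun h => ?_⟩
        have := (triangleGraph_dist_inr_eq_two_iff hji).symm.trans
          (h ▸ triangleGraph_dist_inr_eq_two_iff hji)
        fin_cases k <;> fin_cases l <;> simp_all
    · exact ⟨_, Set.mem_range_self i, dist_ne_dist_of_adj_of_not_adj (by simp) (by simp [hij])⟩

theorem ncard_range_inr_zero :
    (Set.range fun i : ι => (.inr (i, 0) : V ⊕ ι × Fin 3)).ncard = Nat.card ι :=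
  Set.ncard_range_of_injective fun i j h => by simpa using h

theorem localMetricDim_triangleGraph [Finite V] [Finite ι] [Nontrivial ι]
    (hcol : ∀ ⦃u v⦄, J.Adj u v → col u ≠ col v) :
    localMetricDim (triangleGraph J col) = Nat.card ι :=
  localMetricDim_eq (triangleGraph_isLocalMetricSet hcol) ncard_range_inr_zero
    fun _ => triangleGraph_card_le_ncard

end TriangleGraph

/-- For any graph `J` with `χ(J) ≥ 2` and any `m ≥ χ(J)`, there is a graph `G`
containing `J` as an induced subgraph with `dim_l(G) = m` and having a local metric
basis disjoint from `V(J)`. -/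
theorem stmt_17 {VJ : Type} [Fintype VJ] (J : SimpleGraph VJ)
    (hχ : 2 ≤ J.chromaticNumber) (m : ℕ) (hm : J.chromaticNumber ≤ (m : ℕ∞)) :
    ∃ (VG : Type) (_ : Fintype VG) (G : SimpleGraph VG) (ι : VJ → VG),
      Function.Injective ι ∧
      (∀ a b : VJ, G.Adj (ι a) (ι b) ↔ J.Adj a b) ∧
      localMetricDim G = m ∧
      ∃ B : Set VG, IsLocalMetricSet G B ∧ B.ncard = m ∧ ∀ a : VJ, ι a ∉ B := by
  obtain ⟨C⟩ := chromaticNumber_le_iff_colorable.mp hm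
  have : Nontrivial (Fin m) := Fin.nontrivial_iff_two_le.mpr (by exact_mod_cast hχ.trans hm)
  have hcol : ∀ ⦃u v⦄, J.Adj u v → C u ≠ C v := fun _ _ => C.valid
  refine ⟨_, inferInstance, triangleGraph J C, .inl, Sum.inl_injective, fun _ _ => .rfl, ?_, _,
    triangleGraph_isLocalMetricSet hcol, ?_, by simp⟩
  · exact (localMetricDim_triangleGraph hcol).trans (Nat.card_fin m)
  · exact ncard_range_inr_zero.trans (Nat.card_fin m)
end

section
/- Let J be any graph, m ≥ 1, and let G_i = J + \overline{K_{m_i}} (the join of J with an empty graph on m_i ≥ 1 vertices) for i = 1,…,n. Let H be the amalgamation of the G_i over J. Then dim_l(H) = dim_l(J + K_1). -/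
open SimpleGraph

/-- The join of `J` with an edgeless graph on `m` vertices. -/
def joinEmpty {VJ : Type*} (J : SimpleGraph VJ) (m : ℕ) : SimpleGraph (VJ ⊕ Fin m) :=
  SimpleGraph.fromRel (fun x y =>
    (∃ a b : VJ, x = Sum.inl a ∧ y = Sum.inl b ∧ J.Adj a b) ∨
    (∃ (a : VJ) (b : Fin m), x = Sum.inl a ∧ y = Sum.inr b))

section Aux

open scoped Classical

variable {VJ : Type*} (J : SimpleGraph VJ)

/-- The "distance code" of two `J`-vertices inside any graph of the shape `J + K̄_M`. -/
noncomputable def jcode (c a : VJ) : ℕ :=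
  if c = a then 0 else if J.Adj c a then 1 else 2

/-- A graph `H` on `W` is `J`-structured via `g : VJ → W` when it looks like
the join of `J` (embedded via `g`) with a nonempty edgeless set of outside vertices. -/
structure JStruct {W : Type*} (H : SimpleGraph W) (g : VJ → W) : Prop where
  inj : Function.Injective g
  adj_gg : ∀ a b, H.Adj (g a) (g b) ↔ J.Adj a b
  adj_go : ∀ a w, w ∉ Set.range g → H.Adj (g a) w
  not_adj_oo : ∀ w w', w ∉ Set.range g → w' ∉ Set.range g → ¬H.Adj w w'
  out_nonempty : ∃ w, w ∉ Set.range g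

variable {J}
variable {W : Type*} {H : SimpleGraph W} {g : VJ → W}

lemma JStruct.dist_go (h : JStruct J H g) (a : VJ) (w : W) (hw : w ∉ Set.range g) :
    H.dist (g a) w = 1 :=
  dist_eq_one_iff_adj.mpr (h.adj_go a w hw)

lemma JStruct.dist_gg (h : JStruct J H g) (c a : VJ) : H.dist (g c) (g a) = jcode J c a := by
  unfold jcode
  split_ifs with h1 h2
  · subst h1; exact dist_self
  · exact dist_eq_one_iff_adj.mpr ((h.adj_gg c a).mpr h2)
  · obtain ⟨o, ho⟩ := h.out_nonempty
    let p : H.Walk (g c) (g a) :=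
      Walk.cons (h.adj_go c o ho) (Walk.cons (h.adj_go a o ho).symm Walk.nil)
    have hle : H.dist (g c) (g a) ≤ 2 := (dist_le p).trans (le_of_eq (by simp [p]))
    have hne : g c ≠ g a := fun hh => h1 (h.inj hh)
    have hpos : 0 < H.dist (g c) (g a) := Reachable.pos_dist_of_ne ⟨p⟩ hne
    have hno : H.dist (g c) (g a) ≠ 1 := fun hh =>
      h2 ((h.adj_gg c a).mp (dist_eq_one_iff_adj.mp hh))
    omega

lemma JStruct.dist_oo (h : JStruct J H g) {w w' : W} (hw : w ∉ Set.range g)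
    (hw' : w' ∉ Set.range g) (hne : w ≠ w') (a : VJ) : H.dist w w' = 2 := by
  let p : H.Walk w w' :=
    Walk.cons (h.adj_go a w hw).symm (Walk.cons (h.adj_go a w' hw') Walk.nil)
  have hle : H.dist w w' ≤ 2 := (dist_le p).trans (le_of_eq (by simp [p]))
  have hpos : 0 < H.dist w w' := Reachable.pos_dist_of_ne ⟨p⟩ hne
  have hno : H.dist w w' ≠ 1 := fun hh =>
    h.not_adj_oo w w' hw hw' (dist_eq_one_iff_adj.mp hh)
  omega

variable (J) in
/-- Abstract characterization of local metric sets of a `J`-structured graph, in terms of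
the trace `T` on `J` and the proposition `p` = "the set meets the outside vertices". -/
def JCond (T : Set VJ) (p : Prop) : Prop :=
  (∀ a b, J.Adj a b → ∃ c ∈ T, jcode J c a ≠ jcode J c b) ∧
  (p ∨ ∀ a : VJ, ∃ c ∈ T, c = a ∨ ¬ J.Adj c a)

lemma JStruct.lms_iff (h : JStruct J H g) (S : Set W) :
    IsLocalMetricSet H S ↔ JCond J (g ⁻¹' S) (∃ w ∈ S, w ∉ Set.range g) := by
  constructor
  · intro hS
    constructor
    · intro a b hab
      obtain ⟨s, hsS, hsd⟩ := hS (g a) (g b) ((h.adj_gg a b).mpr hab)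
      by_cases hs : s ∈ Set.range g
      · obtain ⟨c, rfl⟩ := hs
        exact ⟨c, hsS, by rwa [h.dist_gg c a, h.dist_gg c b] at hsd⟩
      · exfalso
        apply hsd
        rw [dist_comm, h.dist_go a s hs, dist_comm, h.dist_go b s hs]
    · by_cases hp : ∃ w ∈ S, w ∉ Set.range g
      · exact Or.inl hp
      · refine Or.inr fun a => ?_
        push_neg at hp
        obtain ⟨o, ho⟩ := h.out_nonempty
        obtain ⟨s, hsS, hsd⟩ := hS (g a) o (h.adj_go a o ho)
        obtain ⟨c, rfl⟩ := hp s hsS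
        refine ⟨c, hsS, ?_⟩
        rw [h.dist_gg c a, h.dist_go c o ho] at hsd
        unfold jcode at hsd
        split_ifs at hsd with h1 h2
        · exact Or.inl h1
        · exact absurd rfl hsd
        · exact Or.inr h2
  · intro hC u v huv
    have cross : ∀ (a : VJ) (v : W), v ∉ Set.range g →
        ∃ s ∈ S, H.dist s (g a) ≠ H.dist s v := by
      intro a v hv
      rcases hC.2 with ⟨s, hsS, hso⟩ | hall
      · refine ⟨s, hsS, ?_⟩
        have h1 : H.dist s (g a) = 1 := by rw [SimpleGraph.dist_comm]; exact h.dist_go a s hso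
        by_cases hsv : s = v
        · subst hsv; rw [h1, SimpleGraph.dist_self]; omega
        · rw [h1, h.dist_oo hso hv hsv a]; omega
      · obtain ⟨c, hcT, hc⟩ := hall a
        refine ⟨g c, hcT, ?_⟩
        rw [h.dist_gg c a, h.dist_go c v hv]
        unfold jcode
        split_ifs with h1 h2
        · omega
        · exact absurd h2 (by rcases hc with rfl | hc; exact absurd rfl h1; exact hc)
        · omega
    by_cases hu : u ∈ Set.range g <;> by_cases hv : v ∈ Set.range g
    · obtain ⟨a, rfl⟩ := hu; obtain ⟨b, rfl⟩ := hv
      obtain ⟨c, hcT, hcd⟩ := hC.1 a b ((h.adj_gg a b).mp huv)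
      exact ⟨g c, hcT, by rw [h.dist_gg c a, h.dist_gg c b]; exact hcd⟩
    · obtain ⟨a, rfl⟩ := hu
      exact cross a v hv
    · obtain ⟨b, rfl⟩ := hv
      obtain ⟨s, hsS, hsd⟩ := cross b u hu
      exact ⟨s, hsS, hsd.symm⟩
    · exact absurd huv (h.not_adj_oo u v hu hv)

lemma univ_lms {W : Type*} (G : SimpleGraph W) : IsLocalMetricSet G Set.univ := by
  intro u v huv
  refine ⟨u, Set.mem_univ u, ?_⟩
  rw [dist_self, dist_eq_one_iff_adj.mpr huv]
  omega

lemma JStruct.dim_le {W1 W2 : Type*} [Fintype W1] [Fintype W2]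
    {H1 : SimpleGraph W1} {H2 : SimpleGraph W2} {g1 : VJ → W1} {g2 : VJ → W2}
    (h1 : JStruct J H1 g1) (h2 : JStruct J H2 g2) :
    localMetricDim H1 ≤ localMetricDim H2 := by
  have hne2 : {n | ∃ S : Set W2, S.ncard = n ∧ IsLocalMetricSet H2 S}.Nonempty :=
    ⟨(Set.univ : Set W2).ncard, Set.univ, rfl, univ_lms H2⟩
  obtain ⟨S, hScard, hSlms⟩ := Nat.sInf_mem hne2
  rw [h2.lms_iff S] at hSlms
  set T : Set VJ := g2 ⁻¹' S with hT
  have hTcard : T.ncard = (S ∩ Set.range g2).ncard := by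
    rw [← Set.ncard_image_of_injective T h2.inj, Set.image_preimage_eq_inter_range]
  by_cases hp : ∃ w ∈ S, w ∉ Set.range g2
  · obtain ⟨o1, ho1⟩ := h1.out_nonempty
    set S' : Set W1 := g1 '' T ∪ {o1} with hS'
    have hT' : g1 ⁻¹' S' = T := by
      ext x
      simp only [hS', Set.preimage_union, Set.mem_union, Set.mem_preimage,
        Set.mem_singleton_iff]
      constructor
      · rintro (hx | hx)
        · obtain ⟨c, hc, hcx⟩ := hx
          rwa [← h1.inj hcx]
        · exact absurd ⟨x, hx⟩ ho1
      · intro hx; exact Or.inl ⟨x, hx, rfl⟩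
    have hlms' : IsLocalMetricSet H1 S' := by
      rw [h1.lms_iff S', hT']
      exact ⟨hSlms.1, Or.inl ⟨o1, Or.inr rfl, ho1⟩⟩
    have hcard' : S'.ncard ≤ S.ncard := by
      have e1 : S'.ncard ≤ T.ncard + 1 := by
        calc S'.ncard ≤ (g1 '' T).ncard + ({o1} : Set W1).ncard := Set.ncard_union_le _ _
        _ = T.ncard + 1 := by rw [Set.ncard_image_of_injective T h1.inj, Set.ncard_singleton]
      have e2 : (S ∩ Set.range g2).ncard + (S \ Set.range g2).ncard = S.ncard :=
        Set.ncard_inter_add_ncard_diff_eq_ncard S (Set.range g2) S.toFinite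
      have e3 : 0 < (S \ Set.range g2).ncard := by
        rw [Set.ncard_pos (S \ Set.range g2).toFinite]
        obtain ⟨w, hw1, hw2⟩ := hp
        exact ⟨w, hw1, hw2⟩
      omega
    calc localMetricDim H1 ≤ S'.ncard := Nat.sInf_le ⟨S', rfl, hlms'⟩
    _ ≤ S.ncard := hcard'
    _ = localMetricDim H2 := hScard
  · set S' : Set W1 := g1 '' T with hS'
    have hT' : g1 ⁻¹' S' = T := Set.preimage_image_eq T h1.inj
    have hlms' : IsLocalMetricSet H1 S' := by
      rw [h1.lms_iff S', hT']
      refine ⟨hSlms.1, Or.inr ?_⟩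
      rcases hSlms.2 with hl | hr
      · exact absurd hl hp
      · exact hr
    have hcard' : S'.ncard ≤ S.ncard := by
      rw [hS', Set.ncard_image_of_injective T h1.inj, hTcard]
      exact Set.ncard_le_ncard Set.inter_subset_left S.toFinite
    calc localMetricDim H1 ≤ S'.ncard := Nat.sInf_le ⟨S', rfl, hlms'⟩
    _ ≤ S.ncard := hcard'
    _ = localMetricDim H2 := hScard

lemma joinEmpty_adj_inl_inl {m : ℕ} (a b : VJ) :
    (joinEmpty J m).Adj (Sum.inl a) (Sum.inl b) ↔ J.Adj a b := by
  simp only [joinEmpty, fromRel_adj, ne_eq, Sum.inl.injEq]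
  constructor
  · rintro ⟨hne, (⟨a', b', ha, hb, hab⟩ | ⟨a', x, ha, hb⟩) |
      (⟨a', b', ha, hb, hab⟩ | ⟨a', x, ha, hb⟩)⟩
    · cases ha; cases hb; exact hab
    · exact absurd hb (by simp)
    · cases ha; cases hb; exact hab.symm
    · exact absurd hb (by simp)
  · intro hab
    exact ⟨hab.ne, Or.inl (Or.inl ⟨a, b, rfl, rfl, hab⟩)⟩

lemma joinEmpty_adj_inl_inr {m : ℕ} (a : VJ) (x : Fin m) :
    (joinEmpty J m).Adj (Sum.inl a) (Sum.inr x) := by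
  simp only [joinEmpty, fromRel_adj]
  exact ⟨by simp, Or.inl (Or.inr ⟨a, x, rfl, rfl⟩)⟩

lemma joinEmpty_not_adj_inr_inr {m : ℕ} (x y : Fin m) :
    ¬ (joinEmpty J m).Adj (Sum.inr x) (Sum.inr y) := by
  simp only [joinEmpty, fromRel_adj]
  rintro ⟨hne, (⟨a', b', ha, hb, hab⟩ | ⟨a', z, ha, hb⟩) |
    (⟨a', b', ha, hb, hab⟩ | ⟨a', z, ha, hb⟩)⟩ <;> simp_all

lemma not_mem_range_inl {m : ℕ} (w : VJ ⊕ Fin m) :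
    w ∉ Set.range (Sum.inl : VJ → VJ ⊕ Fin m) ↔ ∃ x, w = Sum.inr x := by
  cases w <;> simp

lemma joinEmpty_jstruct {m : ℕ} (hm : 1 ≤ m) :
    JStruct J (joinEmpty J m) (Sum.inl : VJ → VJ ⊕ Fin m) where
  inj := Sum.inl_injective
  adj_gg := joinEmpty_adj_inl_inl
  adj_go := by
    intro a w hw
    obtain ⟨x, rfl⟩ := (not_mem_range_inl w).mp hw
    exact joinEmpty_adj_inl_inr a x
  not_adj_oo := by
    intro w w' hw hw'
    obtain ⟨x, rfl⟩ := (not_mem_range_inl w).mp hw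
    obtain ⟨y, rfl⟩ := (not_mem_range_inl w').mp hw'
    exact joinEmpty_not_adj_inr_inr x y
  out_nonempty := ⟨Sum.inr ⟨0, hm⟩, by simp⟩

end Aux

/-- For the amalgamation `H` of the graphs `G i = J + ∅K_{m i}` (joins of `J` with
edgeless graphs) over `J`, `dim_l(H) = dim_l(J + K₁)`. -/
theorem stmt_18 {ι VJ W : Type*} [Nonempty ι] [Fintype VJ] [Fintype W]
    (J : SimpleGraph VJ) (m : ι → ℕ) (hm : ∀ i, 1 ≤ m i)
    (H : SimpleGraph W) (f : ∀ i, (VJ ⊕ Fin (m i)) → W)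
    (amal : IsAmalgamation J (fun i => joinEmpty J (m i)) H
      (fun i => Sum.inl) f) :
    localMetricDim H = localMetricDim (joinEmpty J 1) := by
  obtain ⟨i0⟩ := ‹Nonempty ι›
  set g : VJ → W := fun a => f i0 (Sum.inl a) with hg
  have mem_range_g : ∀ (i : ι) (b : VJ), f i (Sum.inl b) ∈ Set.range g := by
    intro i b
    exact ⟨b, (amal.compat i0 i b)⟩
  have hH : JStruct J H g := by
    refine ⟨?_, ?_, ?_, ?_, ?_⟩
    · intro a b hab
      exact Sum.inl_injective (amal.f_inj i0 hab)
    · intro a b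
      exact (amal.f_ind i0 (Sum.inl a) (Sum.inl b)).trans (joinEmpty_adj_inl_inl a b)
    · intro a w hw
      obtain ⟨i, x, rfl⟩ := amal.cover w
      cases x with
      | inl b => exact absurd (mem_range_g i b) hw
      | inr x =>
        have hga : g a = f i (Sum.inl a) := amal.compat i0 i a
        rw [hga]
        exact (amal.f_ind i (Sum.inl a) (Sum.inr x)).mpr (joinEmpty_adj_inl_inr a x)
    · intro w w' hw hw' hadj
      obtain ⟨i, p, q, rfl, rfl⟩ := amal.edge_mem _ _ hadj
      cases p with
      | inl b => exact absurd (mem_range_g i b) hw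
      | inr x =>
        cases q with
        | inl b => exact absurd (mem_range_g i b) hw'
        | inr y =>
          exact joinEmpty_not_adj_inr_inr x y ((amal.f_ind i _ _).mp hadj)
    · refine ⟨f i0 (Sum.inr ⟨0, hm i0⟩), ?_⟩
      rintro ⟨a, ha⟩
      exact absurd (amal.f_inj i0 ha) (by simp)
  have h1 : JStruct J (joinEmpty J 1) (Sum.inl : VJ → VJ ⊕ Fin 1) :=
    joinEmpty_jstruct le_rfl
  exact le_antisymm (hH.dim_le h1) (h1.dim_le hH)
end
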